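/- arXiv:1110.3661 — 10 statements merged into one kernel-verified Lean document; each statement's English description precedes it below -/
import Mathlib

section
/- Let cs be a Coxeter system for a group W with simple reflections sᵢ indexed by B and length function ℓ, and let u, v ∈ W with ℓ(v) = ℓ(u) + 1. If every left inversion of u is a left inversion of v, then there exists i ∈ B such that v = u·sᵢ. -/
/-!
Tits' reflection representation, realised as a permutation action of `W` on `W × Bool`, attaches
to `w` and each reflection `t` a sign `η(w, t)` (`inversionSign`) which is `true` exactly when `t`
is a right inversion of `w`, and which is a cocycle: `η(xy, t) = η(x, y t y⁻¹) xor η(y, t)`. For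
the sets `N(w)` of left inversions this reads `N(xy) = N(x) ∆ x N(y) x⁻¹`, and counting inversions
along a reduced word gives `|N(w)| = ℓ(w)`. If `N(u) ⊆ N(v)`, the cocycle identity for
`v = u (u⁻¹ v)` makes `N(v)` the disjoint union of `N(u)` and `u N(u⁻¹ v) u⁻¹`, so
`ℓ(u⁻¹ v) = ℓ(v) - ℓ(u) = 1` and `u⁻¹ v` is a simple reflection.
-/

theorem List.bodd_count_cons {α : Type*} [BEq α] [LawfulBEq α] (t a : α) (l : List α) :
    ((a :: l).count t).bodd = ((a == t) ^^ (l.count t).bodd) := by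
  rw [List.count_cons]
  cases a == t <;> simp

namespace CoxeterSystem

open List

open scoped Classical

variable {B W : Type*} [Group W] {M : CoxeterMatrix B} (cs : CoxeterSystem M W)

local prefix:100 "s" => cs.simple
local prefix:100 "π" => cs.wordProd
local prefix:100 "ℓ" => cs.length
local prefix:100 "ris" => cs.rightInvSeq
local prefix:100 "lis" => cs.leftInvSeq

theorem simple_mul_mul_simple_eq_iff (i : B) (t w : W) :
    s i * t * s i = w ↔ t = s i * w * s i := by
  constructor <;> rintro rfl <;> simp [mul_assoc, cs.simple_mul_simple_cancel_left]

/-- `(t, b)` encodes the root `±α_t` of the reflection `t` (sign `-` iff `b`), on which `s i` acts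
by `α_t ↦ α_{s i t s i}`, except that `α_{s i} ↦ -α_{s i}`. -/
noncomputable def simpleReflectionPerm (i : B) : Equiv.Perm (W × Bool) :=
  Function.Involutive.toPerm (fun p => (s i * p.1 * s i, p.2 ^^ decide (p.1 = s i)))
    fun ⟨t, b⟩ => by
      ext
      · simp [mul_assoc, cs.simple_mul_simple_cancel_left]
      · simp [cs.simple_mul_mul_simple_eq_iff]

theorem simpleReflectionPerm_apply (i : B) (t : W) (b : Bool) :
    cs.simpleReflectionPerm i (t, b) = (s i * t * s i, b ^^ decide (t = s i)) := rfl

/-- The reflections `(s j * s i) ^ k * s j`, `k < 2 n`, form (in reverse order) the right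
inversion sequence of the alternating word `i j ⋯ i j` of length `2 n`. -/
theorem simpleReflectionPerm_mul_pow_apply (i j : B) (n : ℕ) (t : W) (b : Bool) :
    ((cs.simpleReflectionPerm i * cs.simpleReflectionPerm j) ^ n) (t, b) =
      ((s i * s j) ^ n * t * ((s i * s j) ^ n)⁻¹,
        b ^^ Nat.bodd (((range (2 * n)).map fun k => (s j * s i) ^ k * s j).count t)) := by
  induction n generalizing t b with
  | zero => simp
  | succ n ih =>
    set f : ℕ → W := fun k => (s j * s i) ^ k * s j
    set g : W → W := fun x => s j * s i * x * (s i * s j)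
    have hg : g.Injective := fun x y h => by simpa [g] using h
    have hgf : g ∘ f = fun k => f (k + 2) := funext fun k => by
      simp only [Function.comp_apply, f, g, show k + 2 = 1 + (k + 1) by ring, pow_add, pow_succ,
        pow_zero, one_mul, mul_assoc]
    have hgt : g (s i * (s j * t * s j) * s i) = t := by
      simp [g, mul_assoc, cs.simple_mul_simple_cancel_left]
    have hrange : (range (2 * (n + 1))).map f = f 0 :: f 1 :: (range (2 * n)).map (g ∘ f) := by
      simp [hgf, show 2 * (n + 1) = 2 * n + 1 + 1 by ring, range_succ_eq_map, map_map,
        Function.comp_def]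
    have hcount : ((range (2 * n)).map (g ∘ f)).count t =
        ((range (2 * n)).map f).count (s i * (s j * t * s j) * s i) := by
      rw [← map_map]
      conv_lhs => rw [← hgt]
      exact count_map_of_injective _ g hg _
    rw [pow_succ, Equiv.Perm.mul_apply, Equiv.Perm.mul_apply, simpleReflectionPerm_apply,
      simpleReflectionPerm_apply, ih, hrange, bodd_count_cons, bodd_count_cons, hcount]
    refine Prod.ext ?_ ?_
    · simp [pow_succ, mul_assoc]
    · rw [cs.simple_mul_mul_simple_eq_iff]
      simp only [f, pow_zero, one_mul, pow_one, Bool.xor_assoc, _root_.beq_eq_decide,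
        @eq_comm _ t]

theorem isLiftable_simpleReflectionPerm : M.IsLiftable cs.simpleReflectionPerm := by
  intro i j
  ext ⟨t, b⟩ : 1
  rw [simpleReflectionPerm_mul_pow_apply, cs.simple_mul_simple_pow, two_mul, range_add,
    map_append, count_append, map_map]
  have hperiodic :
      ((fun k => (s j * s i) ^ k * s j) ∘ (M i j + ·)) = fun k => (s j * s i) ^ k * s j := by
    funext k
    simp [pow_add]
  simp [hperiodic]

noncomputable def reflectionRep : W →* Equiv.Perm (W × Bool) :=
  cs.lift ⟨cs.simpleReflectionPerm, cs.isLiftable_simpleReflectionPerm⟩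

theorem reflectionRep_simple (i : B) : cs.reflectionRep (s i) = cs.simpleReflectionPerm i :=
  cs.lift_apply_simple _ i

theorem reflectionRep_wordProd_apply (ω : List B) (t : W) (b : Bool) :
    cs.reflectionRep (π ω) (t, b) = (π ω * t * (π ω)⁻¹, b ^^ Nat.bodd ((ris ω).count t)) := by
  induction ω generalizing b with
  | nil => simp
  | cons i ω ih =>
    have hconj : π ω * t * (π ω)⁻¹ = s i ↔ (π ω)⁻¹ * s i * π ω = t := by
      constructor
      · intro h
        rw [← h]
        group
      · rintro rfl
        group
    rw [cs.wordProd_cons, map_mul, Equiv.Perm.mul_apply, ih, reflectionRep_simple,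
      simpleReflectionPerm_apply, rightInvSeq, bodd_count_cons, _root_.beq_eq_decide, ← hconj]
    refine Prod.ext ?_ ?_
    · simp [mul_assoc]
    · simp only [Bool.xor_assoc, Bool.xor_comm (count t _).bodd]

noncomputable def inversionSign (w t : W) : Bool := (cs.reflectionRep w (t, false)).2

theorem inversionSign_wordProd (ω : List B) (t : W) :
    cs.inversionSign (π ω) t = Nat.bodd ((ris ω).count t) := by
  simp [inversionSign, reflectionRep_wordProd_apply]

theorem reflectionRep_apply (w t : W) (b : Bool) :
    cs.reflectionRep w (t, b) = (w * t * w⁻¹, b ^^ cs.inversionSign w t) := by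
  obtain ⟨ω, rfl⟩ := cs.wordProd_surjective w
  rw [reflectionRep_wordProd_apply, inversionSign_wordProd]

theorem inversionSign_mul (x y t : W) :
    cs.inversionSign (x * y) t = (cs.inversionSign x (y * t * y⁻¹) ^^ cs.inversionSign y t) := by
  rw [inversionSign, map_mul, Equiv.Perm.mul_apply, reflectionRep_apply, reflectionRep_apply,
    Bool.false_xor, Bool.xor_comm]

theorem inversionSign_self {t : W} (ht : cs.IsReflection t) : cs.inversionSign t t = true := by
  obtain ⟨w, i, rfl⟩ := ht
  have hw : (cs.reflectionRep w)⁻¹ (w * s i * w⁻¹, false) = (s i, cs.inversionSign w (s i)) := by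
    rw [Equiv.Perm.inv_eq_iff_eq, reflectionRep_apply, Bool.xor_self]
  rw [inversionSign, map_mul, map_mul, map_inv, Equiv.Perm.mul_apply, Equiv.Perm.mul_apply, hw,
    reflectionRep_simple, simpleReflectionPerm_apply, reflectionRep_apply]
  simp

theorem isRightInversion_of_inversionSign {w t : W} (h : cs.inversionSign w t = true) :
    cs.IsRightInversion w t := by
  obtain ⟨ω, hω, rfl⟩ := cs.exists_isReduced w
  rw [inversionSign_wordProd] at h
  refine cs.isRightInversion_of_mem_rightInvSeq hω (count_pos_iff.mp ?_)
  by_contra! h0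
  simp_all

theorem isRightInversion_iff_inversionSign {w t : W} (ht : cs.IsReflection t) :
    cs.IsRightInversion w t ↔ cs.inversionSign w t = true := by
  refine ⟨fun h => ?_, cs.isRightInversion_of_inversionSign⟩
  by_contra hw
  have hwt : cs.inversionSign (w * t) t = true := by
    simpa [inversionSign_mul, ht.mul_self, ht.inv, inversionSign_self cs ht] using hw
  have := (cs.isRightInversion_of_inversionSign hwt).2
  rw [mul_assoc, ht.mul_self, mul_one] at this
  exact lt_asymm this h.2

theorem mem_rightInvSeq_iff {ω : List B} (hω : cs.IsReduced ω) (t : W) :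
    t ∈ ris ω ↔ cs.IsRightInversion (π ω) t := by
  refine ⟨cs.isRightInversion_of_mem_rightInvSeq hω, fun h => ?_⟩
  rw [isRightInversion_iff_inversionSign cs h.1, inversionSign_wordProd] at h
  refine count_pos_iff.mp (Nat.pos_of_ne_zero fun h0 => ?_)
  simp [h0] at h

theorem mem_leftInvSeq_iff {ω : List B} (hω : cs.IsReduced ω) (t : W) :
    t ∈ lis ω ↔ cs.IsLeftInversion (π ω) t := by
  rw [← isRightInversion_inv_iff, ← wordProd_reverse, ← mem_rightInvSeq_iff cs
    ((cs.isReduced_reverse_iff ω).mpr hω), rightInvSeq_reverse, mem_reverse]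

theorem setOf_isLeftInversion_wordProd {ω : List B} (hω : cs.IsReduced ω) :
    {t | cs.IsLeftInversion (π ω) t} = ↑(lis ω).toFinset := by
  ext t
  simp [mem_leftInvSeq_iff cs hω]

theorem finite_setOf_isLeftInversion (w : W) : {t | cs.IsLeftInversion w t}.Finite := by
  obtain ⟨ω, hω, rfl⟩ := cs.exists_isReduced w
  rw [setOf_isLeftInversion_wordProd cs hω]
  exact Finset.finite_toSet _

theorem ncard_setOf_isLeftInversion (w : W) : {t | cs.IsLeftInversion w t}.ncard = ℓ w := by
  obtain ⟨ω, hω, rfl⟩ := cs.exists_isReduced w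
  rw [setOf_isLeftInversion_wordProd cs hω, Set.ncard_coe_finset,
    toFinset_card_of_nodup hω.nodup_leftInvSeq, length_leftInvSeq, hω]

theorem isLeftInversion_iff_inversionSign {w t : W} (ht : cs.IsReflection t) :
    cs.IsLeftInversion w t ↔ cs.inversionSign w⁻¹ t = true := by
  rw [← isRightInversion_inv_iff, isRightInversion_iff_inversionSign cs ht]

theorem isLeftInversion_mul_iff (x y t : W) :
    cs.IsLeftInversion (x * y) t ↔
      Xor (cs.IsLeftInversion x t) (cs.IsLeftInversion y (x⁻¹ * t * x)) := by
  have hconj : cs.IsReflection (x⁻¹ * t * x) ↔ cs.IsReflection t := by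
    simpa using cs.isReflection_conj_iff x⁻¹ t
  by_cases ht : cs.IsReflection t
  · rw [isLeftInversion_iff_inversionSign cs ht, isLeftInversion_iff_inversionSign cs ht,
      isLeftInversion_iff_inversionSign cs (hconj.mpr ht), mul_inv_rev, inversionSign_mul]
    cases cs.inversionSign x⁻¹ t <;> simp
  · simp [IsLeftInversion, ht, hconj]

theorem length_eq_length_add_length_inv_mul {u v : W}
    (h : ∀ t, cs.IsLeftInversion u t → cs.IsLeftInversion v t) :
    ℓ v = ℓ u + ℓ (u⁻¹ * v) := by
  have hv : ∀ t, cs.IsLeftInversion v t ↔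
      Xor (cs.IsLeftInversion u t) (cs.IsLeftInversion (u⁻¹ * v) (u⁻¹ * t * u)) := by
    simpa using cs.isLeftInversion_mul_iff u (u⁻¹ * v)
  have hdiff : {t | cs.IsLeftInversion v t} \ {t | cs.IsLeftInversion u t} =
      (fun r => u * r * u⁻¹) '' {r | cs.IsLeftInversion (u⁻¹ * v) r} := by
    ext t
    simp only [Set.mem_sdiff, Set.mem_ofPred_eq, Set.mem_image]
    constructor
    · rintro ⟨hvt, hut⟩
      refine ⟨u⁻¹ * t * u, ?_, by group⟩
      simpa [hut] using (hv t).mp hvt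
    · rintro ⟨r, hr, rfl⟩
      have hvr : cs.IsLeftInversion v (u * r * u⁻¹) ↔ ¬ cs.IsLeftInversion u (u * r * u⁻¹) := by
        simpa [mul_assoc, hr, xor_comm] using hv (u * r * u⁻¹)
      have hur : ¬ cs.IsLeftInversion u (u * r * u⁻¹) := fun hu => hvr.mp (h _ hu) hu
      exact ⟨hvr.mpr hur, hur⟩
  have hinj : (fun r => u * r * u⁻¹).Injective := fun a b hab => by simpa using hab
  have hsub : {t | cs.IsLeftInversion u t} ⊆ {t | cs.IsLeftInversion v t} := h
  rw [← ncard_setOf_isLeftInversion, ← ncard_setOf_isLeftInversion,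
    ← ncard_setOf_isLeftInversion, ← Set.ncard_sdiff_add_ncard_of_subset hsub
    (cs.finite_setOf_isLeftInversion v), hdiff, Set.ncard_image_of_injective _ hinj, add_comm]

end CoxeterSystem

/-- **Lemma (adjacency of finite biconvex sets).**
Let `cs` be a Coxeter system and `u, v` elements with `ℓ(v) = ℓ(u) + 1`. If every left
inversion of `u` is a left inversion of `v`, then `v = u·sᵢ` for some simple reflection
`sᵢ`. -/
theorem exists_simple_of_leftInversions_subset {B W : Type*} [Group W] {M : CoxeterMatrix B}
    (cs : CoxeterSystem M W) (u v : W) (h1 : cs.length v = cs.length u + 1)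
    (h2 : ∀ t : W, cs.IsLeftInversion u t → cs.IsLeftInversion v t) :
    ∃ i : B, v = u * cs.simple i := by
  have hlength : cs.length (u⁻¹ * v) = 1 := by
    have := cs.length_eq_length_add_length_inv_mul h2
    omega
  obtain ⟨i, hi⟩ := cs.length_eq_one_iff.mp hlength
  exact ⟨i, by rw [← hi, mul_inv_cancel_left]⟩
end

section
/- Let R be a ring and θ an additive invariant on finite-length R-modules. Then (𝓘_θ, 𝓟̄_θ) is a torsion pair: (a) if M lies in 𝓘_θ and N lies in 𝓟̄_θ, then every R-linear map M → N is zero; and (b) every finite-length R-module T possesses a submodule X such that X lies in 𝓘_θ and T/X lies in 𝓟̄_θ. -/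
/-!
On the submodules of a finite-length module `T`, `φ Y := θ(Y)` is a modular function on the
lattice `Submodule R T`, and `X ∈ 𝓘_θ` says `φ Z < φ X` for all `Z < X`, while `T/X ∈ 𝓟̄_θ` says
`φ Y ≤ φ X` for all `Y ≥ X`. Modularity makes the first condition stable under extensions, and a
minimal `Y ≥ X` with `φ Y > φ X` (Artinianity) is such an extension of `X`. So an `X` maximal for
the first condition (Noetherianity) satisfies the second.
For (a): `θ (M / ker f) = θ (im f)` cannot be both positive and nonpositive.
-/

universe u

/-- An *additive invariant* on finite-length modules over a ring `R`: an assignment of a real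
number to every module (whose value is only constrained on finite-length modules) that is
invariant under isomorphism and additive in short exact sequences. -/
structure AdditiveInvariant (R : Type u) [Ring R] where
  /-- The value of the invariant on a module. -/
  val : (M : Type u) → [AddCommGroup M] → [Module R M] → ℝ
  /-- Isomorphism invariance on finite-length modules. -/
  iso_inv : ∀ (M N : Type u) [AddCommGroup M] [Module R M] [AddCommGroup N] [Module R N],
    IsFiniteLength R M → (M ≃ₗ[R] N) → val M = val N
  /-- Additivity with respect to submodules and quotients, on finite-length modules. -/
  additive : ∀ (M : Type u) [AddCommGroup M] [Module R M], IsFiniteLength R M →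
    ∀ N : Submodule R M, val M = val N + val (M ⧸ N)

variable {R : Type u} [Ring R]

/-- `M` lies in `𝓘_θ`: every nonzero quotient `Q` of `M` satisfies `θ(Q) > 0`. -/
def MemI (θ : AdditiveInvariant R) (M : Type u) [AddCommGroup M] [Module R M] : Prop :=
  ∀ N : Submodule R M, N ≠ ⊤ → 0 < θ.val (M ⧸ N)

/-- `M` lies in `𝓘̄_θ`: every nonzero quotient `Q` of `M` satisfies `θ(Q) ≥ 0`. -/
def MemIbar (θ : AdditiveInvariant R) (M : Type u) [AddCommGroup M] [Module R M] : Prop :=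
  ∀ N : Submodule R M, N ≠ ⊤ → 0 ≤ θ.val (M ⧸ N)

/-- `M` lies in `𝓟_θ`: every nonzero submodule `X` of `M` satisfies `θ(X) < 0`. -/
def MemP (θ : AdditiveInvariant R) (M : Type u) [AddCommGroup M] [Module R M] : Prop :=
  ∀ X : Submodule R M, X ≠ ⊥ → θ.val X < 0

/-- `M` lies in `𝓟̄_θ`: every nonzero submodule `X` of `M` satisfies `θ(X) ≤ 0`. -/
def MemPbar (θ : AdditiveInvariant R) (M : Type u) [AddCommGroup M] [Module R M] : Prop :=
  ∀ X : Submodule R M, X ≠ ⊥ → θ.val X ≤ 0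

/-- `M` is `θ`-semistable: `θ(M) = 0` and every submodule `X` of `M` satisfies `θ(X) ≤ 0`. -/
def Semistable (θ : AdditiveInvariant R) (M : Type u) [AddCommGroup M] [Module R M] : Prop :=
  θ.val M = 0 ∧ ∀ X : Submodule R M, θ.val X ≤ 0

open Submodule

section ModularFunction

variable {α : Type*} [Lattice α] {φ : α → ℝ}

def IsStrictMaxBelow (φ : α → ℝ) (a : α) : Prop :=
  ∀ b < a, φ b < φ a

theorem IsStrictMaxBelow.of_le_of_forall_Ico (hφ : ∀ a b, φ (a ⊔ b) + φ (a ⊓ b) = φ a + φ b)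
    {x y : α} (hx : IsStrictMaxBelow φ x) (hxy : x ≤ y) (hy : ∀ z ∈ Set.Ico x y, φ z < φ y) :
    IsStrictMaxBelow φ y := by
  intro z hzy
  have hmod := hφ z x
  have hinf : φ (z ⊓ x) ≤ φ x := by
    rcases (inf_le_right : z ⊓ x ≤ x).lt_or_eq with hlt | heq
    · exact (hx _ hlt).le
    · exact (congrArg φ heq).le
  rcases (sup_le hzy.le hxy).lt_or_eq with hlt | heq
  · linarith [hy _ ⟨le_sup_right, hlt⟩]
  · have hinf_lt : z ⊓ x < x := by
      refine (inf_le_right : z ⊓ x ≤ x).lt_of_ne fun h => hzy.ne ?_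
      rw [← heq, sup_eq_left.mpr (inf_eq_right.mp h)]
    rw [heq] at hmod
    linarith [hx _ hinf_lt]

theorem IsStrictMaxBelow.exists_gt [WellFoundedLT α]
    (hφ : ∀ a b, φ (a ⊔ b) + φ (a ⊓ b) = φ a + φ b) {x y : α} (hx : IsStrictMaxBelow φ x)
    (hxy : x ≤ y) (hlt : φ x < φ y) : ∃ y, x < y ∧ IsStrictMaxBelow φ y := by
  obtain ⟨m, ⟨hxm, hm⟩, hmin⟩ :=
    wellFounded_lt.has_min {w | x ≤ w ∧ φ x < φ w} ⟨y, hxy, hlt⟩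
  refine ⟨m, hxm.lt_of_ne ?_, hx.of_le_of_forall_Ico hφ hxm fun z ⟨hxz, hzm⟩ => ?_⟩
  · rintro rfl
    exact hm.false
  · exact (not_lt.mp fun hz => hmin z ⟨hxz, hz⟩ hzm).trans_lt hm

theorem exists_isStrictMaxBelow_forall_le [OrderBot α] [WellFoundedLT α] [WellFoundedGT α]
    (hφ : ∀ a b, φ (a ⊔ b) + φ (a ⊓ b) = φ a + φ b) :
    ∃ x, IsStrictMaxBelow φ x ∧ ∀ y, x ≤ y → φ y ≤ φ x := by
  obtain ⟨x, hx, hmax⟩ := wellFounded_gt.has_min {x | IsStrictMaxBelow φ x}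
    ⟨⊥, fun b hb => absurd hb not_lt_bot⟩
  refine ⟨x, hx, fun y hxy => not_lt.mp fun hlt => ?_⟩
  obtain ⟨y', hxy', hy'⟩ := hx.exists_gt hφ hxy hlt
  exact hmax y' hy' hxy'

end ModularFunction

namespace AdditiveInvariant

variable (θ : AdditiveInvariant R) {M : Type u} [AddCommGroup M] [Module R M]

theorem val_quotient (hM : IsFiniteLength R M) (N : Submodule R M) :
    θ.val (M ⧸ N) = θ.val M - θ.val N := by
  linarith [θ.additive M hM N]

theorem val_map_subtype (hM : IsFiniteLength R M) (p : Submodule R M) (N : Submodule R p) :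
    θ.val (N.map p.subtype) = θ.val N :=
  (θ.iso_inv _ _ ((hM.of_injective p.injective_subtype).of_injective N.injective_subtype)
    (equivMapOfInjective _ p.injective_subtype N)).symm

theorem val_sup_add_val_inf (hM : IsFiniteLength R M) (p q : Submodule R M) :
    θ.val ↥(p ⊔ q) + θ.val ↥(p ⊓ q) = θ.val p + θ.val q := by
  have hp := θ.val_quotient (hM.of_injective p.injective_subtype)
    (comap p.subtype p ⊓ comap p.subtype q)
  have hpq := θ.val_quotient (hM.of_injective (p ⊔ q).injective_subtype) (comap (p ⊔ q).subtype q)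
  have hiso := θ.iso_inv _ _
    ((hM.of_injective p.injective_subtype).of_surjective (mkQ_surjective _))
    (LinearMap.quotientInfEquivSupQuotient p q)
  have hinf : θ.val ↥(comap p.subtype p ⊓ comap p.subtype q) = θ.val ↥(p ⊓ q) := by
    rw [← θ.val_map_subtype hM, ← comap_inf, map_comap_subtype, inf_left_idem]
  rw [← θ.val_map_subtype hM, map_comap_subtype, inf_eq_right.mpr le_sup_right] at hpq
  linarith

theorem val_map_mkQ (hM : IsFiniteLength R M) {X Y : Submodule R M} (hXY : X ≤ Y) :
    θ.val ↥(Y.map X.mkQ) = θ.val Y - θ.val X := by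
  have hMX := hM.of_surjective X.mkQ_surjective
  have hiso := θ.iso_inv _ _ (hMX.of_surjective (mkQ_surjective _))
    (quotientQuotientEquivQuotient X Y hXY)
  rw [θ.val_quotient hMX, θ.val_quotient hM, θ.val_quotient hM] at hiso
  linarith

theorem memI_of_isStrictMaxBelow (hM : IsFiniteLength R M) {p : Submodule R M}
    (hp : IsStrictMaxBelow (fun q : Submodule R M => θ.val q) p) : MemI θ p := by
  intro N hN
  have hlt : N.map p.subtype < p := by
    simpa using map_strictMono_of_injective p.injective_subtype (lt_top_iff_ne_top.mpr hN)
  rw [θ.val_quotient (hM.of_injective p.injective_subtype), ← θ.val_map_subtype hM]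
  linarith [hp _ hlt]

theorem memPbar_quotient_of_forall_le (hM : IsFiniteLength R M) {X : Submodule R M}
    (hX : ∀ Y, X ≤ Y → θ.val Y ≤ θ.val X) : MemPbar θ (M ⧸ X) := by
  intro S _
  have hXY : X ≤ S.comap X.mkQ := le_comap_mkQ X S
  rw [← map_comap_eq_of_surjective X.mkQ_surjective S, θ.val_map_mkQ hM hXY]
  linarith [hX _ hXY]

theorem linearMap_eq_zero_of_memI_of_memPbar {N : Type u} [AddCommGroup N] [Module R N]
    (hM : IsFiniteLength R M) (hI : MemI θ M) (hP : MemPbar θ N) (f : M →ₗ[R] N) : f = 0 := by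
  by_contra hf
  have hcoim := hI _ fun h => hf (LinearMap.ker_eq_top.mp h)
  have him := hP _ fun h => hf (LinearMap.range_eq_bot.mp h)
  rw [θ.iso_inv _ _ (hM.of_surjective (mkQ_surjective _)) f.quotKerEquivRange] at hcoim
  linarith

end AdditiveInvariant

/-- **Proposition.** `(𝓘_θ, 𝓟̄_θ)` is a torsion pair on finite-length `R`-modules:
(a) every `R`-linear map from a module in `𝓘_θ` to a module in `𝓟̄_θ` is zero, and
(b) every finite-length module `T` has a submodule `X` with `X ∈ 𝓘_θ` and `T/X ∈ 𝓟̄_θ`. -/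
theorem torsionPair_I_Pbar (R : Type u) [Ring R] (θ : AdditiveInvariant R) :
    (∀ (M N : Type u) [AddCommGroup M] [Module R M] [AddCommGroup N] [Module R N],
        IsFiniteLength R M → IsFiniteLength R N →
        MemI θ M → MemPbar θ N → ∀ f : M →ₗ[R] N, f = 0) ∧
    (∀ (T : Type u) [AddCommGroup T] [Module R T], IsFiniteLength R T →
        ∃ X : Submodule R T, MemI θ X ∧ MemPbar θ (T ⧸ X)) := by
  refine ⟨fun M N _ _ _ _ hM _ hI hP f => θ.linearMap_eq_zero_of_memI_of_memPbar hM hI hP f,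
    fun T _ _ hT => ?_⟩
  obtain ⟨_, _⟩ := isFiniteLength_iff_isNoetherian_isArtinian.mp hT
  obtain ⟨X, hXI, hXmax⟩ :=
    exists_isStrictMaxBelow_forall_le (φ := fun Y : Submodule R T => θ.val Y)
      (θ.val_sup_add_val_inf hT)
  exact ⟨X, θ.memI_of_isStrictMaxBelow hT hXI, θ.memPbar_quotient_of_forall_le hT hXmax⟩
end

section
/- Let R be a ring and θ an additive invariant on finite-length R-modules. Then (𝓘̄_θ, 𝓟_θ) is a torsion pair: (a) if M lies in 𝓘̄_θ and N lies in 𝓟_θ, then every R-linear map M → N is zero; and (b) every finite-length R-module T possesses a submodule X such that X lies in 𝓘̄_θ and T/X lies in 𝓟_θ. -/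
universe u

variable {R : Type u} [Ring R]

section Aux

variable (θ : AdditiveInvariant R)

lemma fl_submodule {T : Type u} [AddCommGroup T] [Module R T] (hT : IsFiniteLength R T)
    (N : Submodule R T) : IsFiniteLength R N := by
  obtain ⟨h1, h2⟩ := isFiniteLength_iff_isNoetherian_isArtinian.mp hT
  exact isFiniteLength_iff_isNoetherian_isArtinian.mpr ⟨inferInstance, inferInstance⟩

lemma fl_quotient {T : Type u} [AddCommGroup T] [Module R T] (hT : IsFiniteLength R T)
    (N : Submodule R T) : IsFiniteLength R (T ⧸ N) := by
  obtain ⟨h1, h2⟩ := isFiniteLength_iff_isNoetherian_isArtinian.mp hT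
  exact isFiniteLength_iff_isNoetherian_isArtinian.mpr ⟨inferInstance, inferInstance⟩

lemma val_quot {T : Type u} [AddCommGroup T] [Module R T] (hT : IsFiniteLength R T)
    (N : Submodule R T) : θ.val (T ⧸ N) = θ.val T - θ.val N := by
  have := θ.additive T hT N
  linarith

/-- Modularity of `θ` on the submodule lattice. -/
lemma val_modular {T : Type u} [AddCommGroup T] [Module R T] (hT : IsFiniteLength R T)
    (A B : Submodule R T) :
    θ.val ↥(A ⊔ B) + θ.val ↥(A ⊓ B) = θ.val ↥A + θ.val ↥B := by
  have hAB : IsFiniteLength R ↥(A ⊔ B) := fl_submodule hT _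
  have hA : IsFiniteLength R ↥A := fl_submodule hT _
  have h1 := θ.additive ↥(A ⊔ B) hAB (Submodule.comap (A ⊔ B).subtype B)
  have h2 := θ.additive ↥A hA (Submodule.comap A.subtype (A ⊓ B))
  have e1 : θ.val ↥(Submodule.comap (A ⊔ B).subtype B) = θ.val ↥B :=
    θ.iso_inv _ _ (fl_submodule hAB _) (Submodule.comapSubtypeEquivOfLe le_sup_right)
  have e2 : θ.val ↥(Submodule.comap A.subtype (A ⊓ B)) = θ.val ↥(A ⊓ B) :=
    θ.iso_inv _ _ (fl_submodule hA _) (Submodule.comapSubtypeEquivOfLe inf_le_left)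
  have e3 : θ.val (↥A ⧸ Submodule.comap A.subtype (A ⊓ B))
      = θ.val (↥(A ⊔ B) ⧸ Submodule.comap (A ⊔ B).subtype B) :=
    θ.iso_inv _ _ (fl_quotient hA _) (LinearMap.quotientInfEquivSupQuotient A B)
  linarith

lemma memIbar_of_forall_le {T : Type u} [AddCommGroup T] [Module R T]
    (hT : IsFiniteLength R T) (X : Submodule R T)
    (h : ∀ N ≤ X, θ.val ↥N ≤ θ.val ↥X) : MemIbar θ ↥X := by
  intro N _
  have hX : IsFiniteLength R ↥X := fl_submodule hT X
  rw [val_quot θ hX N]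
  have e1 : θ.val ↥N = θ.val ↥(N.map X.subtype) :=
    θ.iso_inv _ _ (fl_submodule hX _) (Submodule.equivMapOfInjective _ X.injective_subtype N)
  have := h _ (Submodule.map_subtype_le X N)
  linarith

lemma memP_of_forall_lt {T : Type u} [AddCommGroup T] [Module R T]
    (hT : IsFiniteLength R T) (X : Submodule R T)
    (h : ∀ Z, X < Z → θ.val ↥Z < θ.val ↥X) : MemP θ (T ⧸ X) := by
  intro W hW
  set Z := Submodule.comap X.mkQ W with hZdef
  have hXZ : X ≤ Z := by
    intro x hx
    have h0 : X.mkQ x = 0 := (Submodule.Quotient.mk_eq_zero X).mpr hx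
    simp only [hZdef, Submodule.mem_comap, h0]
    exact W.zero_mem
  have hmap : Z.map X.mkQ = W :=
    Submodule.map_comap_eq_of_surjective (Submodule.mkQ_surjective X) W
  have hne : X ≠ Z := by
    intro hEq
    apply hW
    rw [← hmap, ← hEq]
    ext y
    simp only [Submodule.mem_map, Submodule.mem_bot]
    constructor
    · rintro ⟨x, hx, rfl⟩
      exact (Submodule.Quotient.mk_eq_zero X).mpr hx
    · rintro rfl
      exact ⟨0, X.zero_mem, map_zero _⟩
  have hZfl : IsFiniteLength R ↥Z := fl_submodule hT Z
  -- `W ≃ Z ⧸ (X ∩ Z)` via the first isomorphism theorem applied to `mkQ ∘ subtype`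
  set f : ↥Z →ₗ[R] T ⧸ X := X.mkQ.comp Z.subtype with hfdef
  have hker : LinearMap.ker f = Submodule.comap Z.subtype X := by
    rw [hfdef, LinearMap.ker_comp, Submodule.ker_mkQ]
  have hrange : LinearMap.range f = W := by
    rw [hfdef, LinearMap.range_comp, Submodule.range_subtype, hmap]
  have e1 : θ.val (↥Z ⧸ LinearMap.ker f) = θ.val ↥W := by
    refine θ.iso_inv _ _ (fl_quotient hZfl _) ?_
    exact (f.quotKerEquivRange).trans (LinearEquiv.ofEq _ _ hrange)
  have e2 : θ.val ↥(Submodule.comap Z.subtype X) = θ.val ↥X :=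
    θ.iso_inv _ _ (fl_submodule hZfl _) (Submodule.comapSubtypeEquivOfLe hXZ)
  have hq := val_quot θ hZfl (LinearMap.ker f)
  have hlt := h Z (lt_of_le_of_ne hXZ hne)
  rw [hker] at hq e1
  linarith

/-- Abstract lattice lemma: for a modular function on a lattice with well-founded
`<` and `>`, there is an element maximizing the function whose value strictly
decreases on every strictly larger element. -/
lemma exists_good_point {α : Type*} [Lattice α] [OrderBot α]
    [WellFoundedLT α] [WellFoundedGT α] (φ : α → ℝ)
    (hmod : ∀ a b, φ (a ⊔ b) + φ (a ⊓ b) = φ a + φ b) :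
    ∃ x, (∀ n ≤ x, φ n ≤ φ x) ∧ ∀ z, x < z → φ z < φ x := by
  set S : Set α := {x | ∀ n ≤ x, φ n ≤ φ x} with hSdef
  have hbot : (⊥ : α) ∈ S := fun n hn => by rw [le_bot_iff.mp hn]
  obtain ⟨x, hxS, hmax⟩ := (wellFounded_gt (α := α)).has_min S ⟨⊥, hbot⟩
  refine ⟨x, hxS, ?_⟩
  by_contra hcon
  push_neg at hcon
  obtain ⟨z₀, hz₀, hφz₀⟩ := hcon
  set B : Set α := {z | x < z ∧ φ x ≤ φ z} with hBdef
  obtain ⟨z, ⟨hxz, hφz⟩, hmin⟩ := (wellFounded_lt (α := α)).has_min B ⟨z₀, hz₀, hφz₀⟩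
  have hzS : z ∈ S := by
    intro n hn
    have h1 : φ n ≤ φ (n ⊔ x) := by
      have hm := hmod n x
      have h2 : φ (n ⊓ x) ≤ φ x := hxS _ inf_le_right
      linarith
    have hsup_le : n ⊔ x ≤ z := sup_le hn hxz.le
    rcases eq_or_lt_of_le hsup_le with heq | hlt
    · rw [heq] at h1; exact h1
    · have h3 : φ (n ⊔ x) ≤ φ x := by
        rcases eq_or_lt_of_le (le_sup_right : x ≤ n ⊔ x) with heq2 | hlt2
        · rw [← heq2]
        · have := hmin (n ⊔ x)
          by_contra h4
          push_neg at h4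
          exact this ⟨hlt2, h4.le⟩ hlt
      linarith
  exact hmax z hzS hxz

end Aux

/-- **Proposition.** `(𝓘̄_θ, 𝓟_θ)` is a torsion pair on finite-length `R`-modules:
(a) every `R`-linear map from a module in `𝓘̄_θ` to a module in `𝓟_θ` is zero, and
(b) every finite-length module `T` has a submodule `X` with `X ∈ 𝓘̄_θ` and `T/X ∈ 𝓟_θ`. -/
theorem torsionPair_Ibar_P (R : Type u) [Ring R] (θ : AdditiveInvariant R) :
    (∀ (M N : Type u) [AddCommGroup M] [Module R M] [AddCommGroup N] [Module R N],
        IsFiniteLength R M → IsFiniteLength R N →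
        MemIbar θ M → MemP θ N → ∀ f : M →ₗ[R] N, f = 0) ∧
    (∀ (T : Type u) [AddCommGroup T] [Module R T], IsFiniteLength R T →
        ∃ X : Submodule R T, MemIbar θ X ∧ MemP θ (T ⧸ X)) := by
  constructor
  · intro M N _ _ _ _ hM hN hIbar hP f
    by_contra hf
    have hker : LinearMap.ker f ≠ ⊤ := fun h => hf (LinearMap.ker_eq_top.mp h)
    have hrange : LinearMap.range f ≠ ⊥ := fun h => hf (LinearMap.range_eq_bot.mp h)
    have h1 : 0 ≤ θ.val (M ⧸ LinearMap.ker f) := hIbar _ hker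
    have h2 : θ.val ↥(LinearMap.range f) < 0 := hP _ hrange
    have h3 : θ.val (M ⧸ LinearMap.ker f) = θ.val ↥(LinearMap.range f) :=
      θ.iso_inv _ _ (fl_quotient hM _) f.quotKerEquivRange
    linarith
  · intro T _ _ hT
    obtain ⟨hNoe, hArt⟩ := isFiniteLength_iff_isNoetherian_isArtinian.mp hT
    obtain ⟨X, hX1, hX2⟩ := exists_good_point (fun Z : Submodule R T => θ.val ↥Z)
      (fun A B => val_modular θ hT A B)
    exact ⟨X, memIbar_of_forall_le θ hT X hX1, memP_of_forall_lt θ hT X hX2⟩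
end

section
/- Let R be a ring and θ an additive invariant on finite-length R-modules. The class 𝓘_θ is closed under extensions: if T is a finite-length R-module and N ⊆ T is a submodule such that both N and T/N lie in 𝓘_θ, then T lies in 𝓘_θ. -/
universe u

variable {R : Type u} [Ring R]

section Aux

variable {R : Type u} [Ring R]

lemma flSub {M : Type u} [AddCommGroup M] [Module R M] (h : IsFiniteLength R M)
    (p : Submodule R M) : IsFiniteLength R p := by
  rw [isFiniteLength_iff_isNoetherian_isArtinian] at h ⊢
  obtain ⟨h1, h2⟩ := h
  exact ⟨inferInstance, inferInstance⟩

lemma flQuot {M : Type u} [AddCommGroup M] [Module R M] (h : IsFiniteLength R M)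
    (p : Submodule R M) : IsFiniteLength R (M ⧸ p) := by
  rw [isFiniteLength_iff_isNoetherian_isArtinian] at h ⊢
  obtain ⟨h1, h2⟩ := h
  exact ⟨inferInstance, inferInstance⟩

lemma val_bot (θ : AdditiveInvariant R) {M : Type u} [AddCommGroup M] [Module R M]
    (h : IsFiniteLength R M) : θ.val (⊥ : Submodule R M) = 0 := by
  have h1 := θ.additive M h ⊥
  have h2 := θ.iso_inv (M ⧸ (⊥ : Submodule R M)) M (flQuot h ⊥)
    (Submodule.quotEquivOfEqBot ⊥ rfl)
  rw [h2] at h1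
  linarith

lemma val_quot_top (θ : AdditiveInvariant R) {M : Type u} [AddCommGroup M] [Module R M]
    (h : IsFiniteLength R M) : θ.val (M ⧸ (⊤ : Submodule R M)) = 0 := by
  have h1 := θ.additive M h ⊤
  have h2 := θ.iso_inv (⊤ : Submodule R M) M (flSub h ⊤) Submodule.topEquiv
  rw [h2] at h1
  linarith

end Aux

/-- **Lemma.** The class `𝓘_θ` is closed under extensions: if `T` is a finite-length module
and `N ⊆ T` is a submodule such that both `N` and `T/N` lie in `𝓘_θ`, then `T ∈ 𝓘_θ`. -/
theorem memI_of_extension (R : Type u) [Ring R] (θ : AdditiveInvariant R)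
    (T : Type u) [AddCommGroup T] [Module R T] (hT : IsFiniteLength R T)
    (N : Submodule R T) (hN : MemI θ N) (hQ : MemI θ (T ⧸ N)) :
    MemI θ T := by
  intro K hK
  have flQ : IsFiniteLength R (T ⧸ K) := flQuot hT K
  set P : Submodule R (T ⧸ K) := N.map K.mkQ with hP
  have hadd := θ.additive (T ⧸ K) flQ P
  -- θ (P) ≥ 0, > 0 when ¬ N ≤ K
  have hPval : (0 ≤ θ.val P) ∧ (¬ N ≤ K → 0 < θ.val P) := by
    by_cases hle : N ≤ K
    · have : P = ⊥ := by
        rw [hP, eq_bot_iff]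
        rintro x ⟨y, hy, rfl⟩
        simpa using (Submodule.Quotient.mk_eq_zero K).mpr (hle hy)
      rw [this, val_bot θ flQ]
      exact ⟨le_refl _, fun h => absurd hle h⟩
    · have hne : (Submodule.comap N.subtype K) ≠ ⊤ := by
        intro h
        apply hle
        intro x hx
        have := Submodule.eq_top_iff'.mp h ⟨x, hx⟩
        simpa using this
      have hpos := hN _ hne
      have hiso : (↥N ⧸ Submodule.comap N.subtype K) ≃ₗ[R] P := by
        have hker : LinearMap.ker (K.mkQ ∘ₗ N.subtype) = Submodule.comap N.subtype K := by
          rw [LinearMap.ker_comp, Submodule.ker_mkQ]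
        have hrange : LinearMap.range (K.mkQ ∘ₗ N.subtype) = P := by
          rw [LinearMap.range_comp, Submodule.range_subtype]
        exact (Submodule.quotEquivOfEq _ _ hker.symm).trans
          (((K.mkQ ∘ₗ N.subtype).quotKerEquivRange).trans (LinearEquiv.ofEq _ _ hrange))
      have := θ.iso_inv _ _ (flQuot (flSub hT N) _) hiso
      rw [this] at hpos
      exact ⟨le_of_lt hpos, fun _ => hpos⟩
  -- θ ((T⧸K) ⧸ P) ≥ 0, > 0 when N ⊔ K ≠ ⊤
  have hPeq : P = (N ⊔ K).map K.mkQ := by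
    rw [hP, Submodule.map_sup, Submodule.mkQ_map_self, sup_bot_eq]
  have hQiso : ((T ⧸ K) ⧸ P) ≃ₗ[R] T ⧸ (N ⊔ K) := by
    rw [hPeq]
    exact Submodule.quotientQuotientEquivQuotient K (N ⊔ K) le_sup_right
  have hQval : (0 ≤ θ.val ((T ⧸ K) ⧸ P)) ∧ (N ⊔ K ≠ ⊤ → 0 < θ.val ((T ⧸ K) ⧸ P)) := by
    have hval1 := θ.iso_inv _ _ (flQuot flQ P) hQiso
    by_cases htop : N ⊔ K = ⊤
    · have hiso2 : (T ⧸ (N ⊔ K)) ≃ₗ[R] (T ⧸ (⊤ : Submodule R T)) :=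
        Submodule.quotEquivOfEq _ _ htop
      have hval2 := θ.iso_inv _ _ (flQuot hT (N ⊔ K)) hiso2
      rw [hval1, hval2, val_quot_top θ hT]
      exact ⟨le_refl _, fun h => absurd htop h⟩
    · have hiso3 : (T ⧸ (N ⊔ K)) ≃ₗ[R] ((T ⧸ N) ⧸ (N ⊔ K).map N.mkQ) :=
        (Submodule.quotientQuotientEquivQuotient N (N ⊔ K) le_sup_left).symm
      have hne2 : (N ⊔ K).map N.mkQ ≠ ⊤ := by
        intro h
        rw [Submodule.map_mkQ_eq_top] at h
        exact htop (by simpa [← sup_assoc] using h)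
      have hpos := hQ _ hne2
      have hval3 := θ.iso_inv _ _ (flQuot hT (N ⊔ K)) hiso3
      rw [hval1, hval3]
      exact ⟨le_of_lt hpos, fun _ => hpos⟩
  rw [hadd]
  by_cases hle : N ≤ K
  · have htop : N ⊔ K ≠ ⊤ := by
      rw [sup_eq_right.mpr hle]
      exact hK
    exact add_pos_of_nonneg_of_pos hPval.1 (hQval.2 htop)
  · exact add_pos_of_pos_of_nonneg (hPval.2 hle) hQval.1
end

section
/- Let R be a ring and θ an additive invariant on finite-length R-modules. If f : M → N is an R-linear map between θ-semistable finite-length modules, then the kernel of f, the image of f, and the cokernel N/(image of f) are all θ-semistable. (Thus the θ-semistable modules form an abelian subcategory.) -/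
universe u

variable {R : Type u} [Ring R]

lemma IsFiniteLength.submod {M : Type u} [AddCommGroup M] [Module R M]
    (h : IsFiniteLength R M) (P : Submodule R M) : IsFiniteLength R P := by
  obtain ⟨_, _⟩ := isFiniteLength_iff_isNoetherian_isArtinian.mp h
  exact isFiniteLength_iff_isNoetherian_isArtinian.mpr ⟨inferInstance, inferInstance⟩

lemma IsFiniteLength.quot {M : Type u} [AddCommGroup M] [Module R M]
    (h : IsFiniteLength R M) (P : Submodule R M) : IsFiniteLength R (M ⧸ P) := by
  obtain ⟨_, _⟩ := isFiniteLength_iff_isNoetherian_isArtinian.mp h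
  exact isFiniteLength_iff_isNoetherian_isArtinian.mpr ⟨inferInstance, inferInstance⟩

/-- Any submodule (viewed as a module) of a semistable finite-length module of θ-value 0
all of whose submodules have θ ≤ 0 works: helper for submodules of submodules. -/
lemma theta_submod_le {θ : AdditiveInvariant R} {M : Type u} [AddCommGroup M] [Module R M]
    (hM : IsFiniteLength R M) (hMs : ∀ X : Submodule R M, θ.val X ≤ 0)
    (P : Submodule R M) (X : Submodule R P) : θ.val X ≤ 0 := by
  have e := Submodule.equivMapOfInjective P.subtype P.injective_subtype X
  rw [θ.iso_inv _ _ ((hM.submod P).submod X) e]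
  exact hMs _

/-- **Proposition.** The `θ`-semistable modules form an abelian subcategory: if
`f : M → N` is an `R`-linear map between `θ`-semistable finite-length modules, then the
kernel of `f`, the image of `f`, and the cokernel `N/im f` are all `θ`-semistable. -/
theorem semistable_ker_image_coker (R : Type u) [Ring R] (θ : AdditiveInvariant R)
    (M N : Type u) [AddCommGroup M] [Module R M] [AddCommGroup N] [Module R N]
    (hM : IsFiniteLength R M) (hN : IsFiniteLength R N)
    (hMs : Semistable θ M) (hNs : Semistable θ N) (f : M →ₗ[R] N) :
    Semistable θ (LinearMap.ker f) ∧ Semistable θ (LinearMap.range f) ∧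
      Semistable θ (N ⧸ LinearMap.range f) := by
  set K := LinearMap.ker f with hK
  set I := LinearMap.range f with hI
  have hMK : θ.val M = θ.val K + θ.val (M ⧸ K) := θ.additive M hM K
  have hquotI : θ.val (M ⧸ K) = θ.val I :=
    θ.iso_inv _ _ (hM.quot K) (f.quotKerEquivRange)
  have hKle : θ.val K ≤ 0 := hMs.2 K
  have hIle : θ.val I ≤ 0 := hNs.2 I
  have hsum : θ.val K + θ.val I = 0 := by
    rw [← hquotI, ← hMK, hMs.1]
  have hK0 : θ.val K = 0 := by linarith
  have hI0 : θ.val I = 0 := by linarith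
  have hNI : θ.val N = θ.val I + θ.val (N ⧸ I) := θ.additive N hN I
  have hC0 : θ.val (N ⧸ I) = 0 := by
    have := hNs.1; linarith
  refine ⟨⟨hK0, fun X => theta_submod_le hM hMs.2 K X⟩,
    ⟨hI0, fun X => theta_submod_le hN hNs.2 I X⟩, ⟨hC0, fun X => ?_⟩⟩
  -- submodule of cokernel
  set Y := X.comap I.mkQ with hY
  have hIY : I ≤ Y := by
    intro x hx
    simp only [hY, Submodule.mem_comap, Submodule.mkQ_apply]
    rw [(Submodule.Quotient.mk_eq_zero I).mpr hx]
    exact X.zero_mem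
  have hmap : Submodule.map I.mkQ Y = X :=
    Submodule.map_comap_eq_of_surjective (Submodule.mkQ_surjective I) X
  -- third isomorphism: (N ⧸ I) ⧸ X ≃ N ⧸ Y
  have e : ((N ⧸ I) ⧸ X) ≃ₗ[R] (N ⧸ Y) := by
    rw [← hmap]
    exact Submodule.quotientQuotientEquivQuotient I Y hIY
  have h1 : θ.val (N ⧸ I) = θ.val X + θ.val ((N ⧸ I) ⧸ X) :=
    θ.additive _ (hN.quot I) X
  have h2 : θ.val ((N ⧸ I) ⧸ X) = θ.val (N ⧸ Y) :=
    θ.iso_inv _ _ ((hN.quot I).quot X) e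
  have h3 : θ.val N = θ.val Y + θ.val (N ⧸ Y) := θ.additive N hN Y
  have hYle : θ.val Y ≤ 0 := hNs.2 Y
  have := hNs.1
  linarith
end

section
/- Let R be a ring, θ an additive invariant on finite-length R-modules, and T a finite-length R-module. If X ⊆ T is a submodule such that X lies in 𝓘_θ and T/X lies in 𝓟̄_θ, then every submodule Y ⊆ T with Y in 𝓘_θ satisfies Y ⊆ X; in particular, X is the unique submodule of T with these two properties. -/
universe u

variable {R : Type u} [Ring R]

lemma aux_le (θ : AdditiveInvariant R)
    (T : Type u) [AddCommGroup T] [Module R T] (hT : IsFiniteLength R T)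
    (X Y : Submodule R T) (hY : MemI θ Y) (hXP : MemPbar θ (T ⧸ X)) : Y ≤ X := by
  by_contra hle
  obtain ⟨hN, hA⟩ := isFiniteLength_iff_isNoetherian_isArtinian.1 hT
  set f : Y →ₗ[R] T ⧸ X := X.mkQ.comp Y.subtype with hf
  have hker : LinearMap.ker f ≠ ⊤ := by
    intro h
    apply hle
    intro y hy
    have : (⟨y, hy⟩ : Y) ∈ LinearMap.ker f := h ▸ Submodule.mem_top
    simpa [f, Submodule.Quotient.mk_eq_zero] using this
  have hpos : 0 < θ.val (Y ⧸ LinearMap.ker f) := hY _ hker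
  have hfl : IsFiniteLength R (Y ⧸ LinearMap.ker f) :=
    isFiniteLength_iff_isNoetherian_isArtinian.2 ⟨inferInstance, inferInstance⟩
  have hiso := θ.iso_inv _ _ hfl f.quotKerEquivRange
  have hrange : LinearMap.range f ≠ ⊥ := by
    intro h
    apply hker
    rw [eq_top_iff]
    intro y _
    have : f y ∈ LinearMap.range f := LinearMap.mem_range_self f y
    rw [h, Submodule.mem_bot] at this
    simpa [LinearMap.mem_ker] using this
  have := hXP _ hrange
  rw [hiso] at hpos
  exact absurd hpos (not_lt.2 this)

/-- **Lemma.** If `X ⊆ T` is a submodule with `X ∈ 𝓘_θ` and `T/X ∈ 𝓟̄_θ`, then every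
submodule `Y ⊆ T` with `Y ∈ 𝓘_θ` satisfies `Y ⊆ X`; in particular `X` is the unique
submodule of `T` with these two properties. -/
theorem torsion_submodule_unique (R : Type u) [Ring R] (θ : AdditiveInvariant R)
    (T : Type u) [AddCommGroup T] [Module R T] (hT : IsFiniteLength R T)
    (X : Submodule R T) (hXI : MemI θ X) (hXP : MemPbar θ (T ⧸ X)) :
    (∀ Y : Submodule R T, MemI θ Y → Y ≤ X) ∧
    (∀ X' : Submodule R T, MemI θ X' → MemPbar θ (T ⧸ X') → X' = X) := by
  refine ⟨fun Y hY => aux_le θ T hT X Y hY hXP, fun X' hI' hP' => ?_⟩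
  exact le_antisymm (aux_le θ T hT X X' hI' hXP) (aux_le θ T hT X' X hXI hP')
end

section
/- Let R be a ring, θ an additive invariant on finite-length R-modules, and T a finite-length R-module. Suppose X' ⊆ T is a submodule with X' in 𝓘_θ and T/X' in 𝓟̄_θ, and X'' ⊆ T is a submodule with X'' in 𝓘̄_θ and T/X'' in 𝓟_θ. Then X' ⊆ X'' and the subquotient X''/X' is θ-semistable. -/
universe u

variable {R : Type u} [Ring R]

/-
A nonzero map `f : A → B` gives `θ(A / ker f) = θ(im f)`, so there is no nonzero map from a module
in `𝓘_θ` to one in `𝓟̄_θ`; applied to `X' → T/X''` this forces `X' ⊆ X''`. The subquotient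
`X''/X'` embeds into `T/X' ∈ 𝓟̄_θ`, so all its submodules have `θ ≤ 0`, while it is a quotient of
`X'' ∈ 𝓘̄_θ`, so `θ(X''/X') ≥ 0`.
-/

namespace AdditiveInvariant

variable (θ : AdditiveInvariant R) {M N : Type u} [AddCommGroup M] [Module R M]
  [AddCommGroup N] [Module R N]

theorem val_eq_zero_of_subsingleton [Subsingleton M] : θ.val M = 0 := by
  have hM : IsFiniteLength R M := .of_subsingleton
  have hbot : θ.val M = θ.val (⊥ : Submodule R M) := θ.iso_inv _ _ hM (.ofSubsingleton _ _)
  have hquot : θ.val M = θ.val (M ⧸ (⊥ : Submodule R M)) :=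
    θ.iso_inv _ _ hM (Submodule.quotEquivOfEqBot ⊥ rfl).symm
  linarith [θ.additive M hM ⊥]

theorem val_top (hM : IsFiniteLength R M) : θ.val (⊤ : Submodule R M) = θ.val M :=
  (θ.iso_inv _ _ hM Submodule.topEquiv.symm).symm

theorem val_map_of_injective (hN : IsFiniteLength R N) {f : M →ₗ[R] N}
    (hf : Function.Injective f) (X : Submodule R M) : θ.val (X.map f) = θ.val X :=
  θ.iso_inv _ _ (hN.of_injective (X.map f).injective_subtype)
    (Submodule.equivMapOfInjective f hf X).symm

end AdditiveInvariant

section Membership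

variable {θ : AdditiveInvariant R} {M N : Type u} [AddCommGroup M] [Module R M]
  [AddCommGroup N] [Module R N]

theorem MemP.memPbar (h : MemP θ M) : MemPbar θ M :=
  fun X hX => (h X hX).le

theorem MemPbar.val_le_zero (h : MemPbar θ M) (X : Submodule R M) : θ.val X ≤ 0 := by
  rcases eq_or_ne X ⊥ with rfl | hX
  · exact θ.val_eq_zero_of_subsingleton.le
  · exact h X hX

theorem MemIbar.val_quotient_nonneg (h : MemIbar θ M) (X : Submodule R M) :
    0 ≤ θ.val (M ⧸ X) := by
  rcases eq_or_ne X ⊤ with rfl | hX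
  · exact θ.val_eq_zero_of_subsingleton.ge
  · exact h X hX

theorem MemPbar.of_injective (hN : IsFiniteLength R N) (h : MemPbar θ N) {f : M →ₗ[R] N}
    (hf : Function.Injective f) : MemPbar θ M := fun X hX => by
  rw [← θ.val_map_of_injective hN hf X]
  refine h _ fun hmap => hX (Submodule.map_injective_of_injective hf ?_)
  rw [hmap, Submodule.map_bot]

theorem MemI.linearMap_eq_zero (hM : IsFiniteLength R M) (hI : MemI θ M) (hP : MemPbar θ N)
    (f : M →ₗ[R] N) : f = 0 := by
  by_contra hf
  have hker : LinearMap.ker f ≠ ⊤ := fun h => hf (LinearMap.ker_eq_top.mp h)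
  have hrange : LinearMap.range f ≠ ⊥ := fun h => hf (LinearMap.range_eq_bot.mp h)
  have hiso := θ.iso_inv _ _ (hM.of_surjective (Submodule.mkQ_surjective _)) f.quotKerEquivRange
  linarith [hI _ hker, hP _ hrange]

theorem Semistable.of_memPbar (hM : IsFiniteLength R M) (hP : MemPbar θ M)
    (h0 : 0 ≤ θ.val M) : Semistable θ M :=
  ⟨le_antisymm (θ.val_top hM ▸ hP.val_le_zero ⊤) h0, hP.val_le_zero⟩

end Membership

/-- **Proposition.** If `X' ⊆ T` satisfies `X' ∈ 𝓘_θ`, `T/X' ∈ 𝓟̄_θ` (so `X' = T_θ^min`)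
and `X'' ⊆ T` satisfies `X'' ∈ 𝓘̄_θ`, `T/X'' ∈ 𝓟_θ` (so `X'' = T_θ^max`), then
`X' ⊆ X''` and the subquotient `X''/X'` is `θ`-semistable. -/
theorem min_le_max_and_semistable (R : Type u) [Ring R] (θ : AdditiveInvariant R)
    (T : Type u) [AddCommGroup T] [Module R T] (hT : IsFiniteLength R T)
    (X' X'' : Submodule R T)
    (hX'I : MemI θ X') (hX'P : MemPbar θ (T ⧸ X'))
    (hX''I : MemIbar θ X'') (hX''P : MemP θ (T ⧸ X'')) :
    X' ≤ X'' ∧ Semistable θ (X'' ⧸ Submodule.comap X''.subtype X') := by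
  have hle : X' ≤ X'' := by
    have h := hX'I.linearMap_eq_zero (hT.of_injective X'.injective_subtype) hX''P.memPbar
      (X''.mkQ ∘ₗ X'.subtype)
    rwa [← LinearMap.ker_eq_top, LinearMap.ker_comp, Submodule.ker_mkQ,
      Submodule.comap_subtype_eq_top] at h
  set K := Submodule.comap X''.subtype X'
  have hK : K = LinearMap.ker (X'.mkQ ∘ₗ X''.subtype) := by
    rw [LinearMap.ker_comp, Submodule.ker_mkQ]
  have hembed : Function.Injective (K.liftQ (X'.mkQ ∘ₗ X''.subtype) hK.le) :=
    LinearMap.ker_eq_bot.mp (K.ker_liftQ_eq_bot' _ hK)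
  have hQ : IsFiniteLength R (X'' ⧸ K) :=
    (hT.of_injective X''.injective_subtype).of_surjective K.mkQ_surjective
  exact ⟨hle, .of_memPbar hQ (hX'P.of_injective (hT.of_surjective X'.mkQ_surjective) hembed)
    (hX''I.val_quotient_nonneg K)⟩
end

section
/- Let R be a ring, θ an additive invariant on finite-length R-modules, and M, N finite-length R-modules. If a is the greatest element of the set {θ(X) : X a submodule of M} and b is the greatest element of {θ(Y) : Y a submodule of N}, then a + b is the greatest element of {θ(Z) : Z a submodule of M ⊕ N}. (This expresses, at the level of support functions, that the Harder–Narasimhan polytope of a direct sum is the Minkowski sum of the Harder–Narasimhan polytopes of the summands.) -/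
universe u

variable {R : Type u} [Ring R]

section Aux

variable {R : Type u} [Ring R]

private lemma fl_sub {M : Type u} [AddCommGroup M] [Module R M] (h : IsFiniteLength R M)
    (Z : Submodule R M) : IsFiniteLength R Z := by
  rw [isFiniteLength_iff_isNoetherian_isArtinian] at h ⊢
  obtain ⟨h1, h2⟩ := h
  exact ⟨inferInstance, inferInstance⟩

private lemma fl_quot {M : Type u} [AddCommGroup M] [Module R M] (h : IsFiniteLength R M)
    (Z : Submodule R M) : IsFiniteLength R (M ⧸ Z) := by
  rw [isFiniteLength_iff_isNoetherian_isArtinian] at h ⊢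
  obtain ⟨h1, h2⟩ := h
  exact ⟨inferInstance, inferInstance⟩

private lemma fl_prod {M N : Type u} [AddCommGroup M] [Module R M] [AddCommGroup N] [Module R N]
    (hM : IsFiniteLength R M) (hN : IsFiniteLength R N) : IsFiniteLength R (M × N) := by
  rw [isFiniteLength_iff_isNoetherian_isArtinian] at hM hN ⊢
  obtain ⟨h1, h2⟩ := hM; obtain ⟨h3, h4⟩ := hN
  exact ⟨inferInstance, inferInstance⟩

/-- A submodule product is isomorphic to the product of the submodules. -/
private def prodSubEquiv {M N : Type u} [AddCommGroup M] [Module R M] [AddCommGroup N]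
    [Module R N] (X : Submodule R M) (Y : Submodule R N) :
    (X.prod Y : Submodule R (M × N)) ≃ₗ[R] X × Y where
  toFun z := (⟨z.val.1, z.property.1⟩, ⟨z.val.2, z.property.2⟩)
  invFun p := ⟨(p.1.val, p.2.val), ⟨p.1.property, p.2.property⟩⟩
  left_inv z := rfl
  right_inv p := rfl
  map_add' _ _ := rfl
  map_smul' _ _ := rfl

end Aux

/-- **Remark (Minkowski additivity of HN polytopes for direct sums, at the level of support
functions).** If `a` is the greatest value of `θ` on submodules of `M` and `b` is the
greatest value of `θ` on submodules of `N`, then `a + b` is the greatest value of `θ`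
on submodules of `M ⊕ N`. -/
theorem isGreatest_theta_prod (R : Type u) [Ring R] (θ : AdditiveInvariant R)
    (M N : Type u) [AddCommGroup M] [Module R M] [AddCommGroup N] [Module R N]
    (hM : IsFiniteLength R M) (hN : IsFiniteLength R N) (a b : ℝ)
    (ha : IsGreatest (Set.range fun X : Submodule R M => θ.val X) a)
    (hb : IsGreatest (Set.range fun Y : Submodule R N => θ.val Y) b) :
    IsGreatest (Set.range fun Z : Submodule R (M × N) => θ.val Z) (a + b) := by
  have hMN : IsFiniteLength R (M × N) := fl_prod hM hN
  constructor
  · -- attained by X.prod Y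
    obtain ⟨X, hX⟩ := ha.1
    obtain ⟨Y, hY⟩ := hb.1
    refine ⟨X.prod Y, ?_⟩
    have hfl : IsFiniteLength R (X.prod Y : Submodule R (M × N)) := fl_sub hMN _
    have e1 : θ.val (X.prod Y : Submodule R (M × N)) = θ.val (X × Y) :=
      θ.iso_inv _ _ hfl (prodSubEquiv X Y)
    have hflXY : IsFiniteLength R (X × Y) := fl_prod (fl_sub hM X) (fl_sub hN Y)
    -- additivity on X × Y with the kernel of the second projection
    set φ : (X × Y) →ₗ[R] Y := LinearMap.snd R X Y with hφ
    have hadd := θ.additive (X × Y) hflXY (LinearMap.ker φ)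
    have hsurj : Function.Surjective φ := fun y => ⟨(0, y), rfl⟩
    have e2 : θ.val ((X × Y) ⧸ LinearMap.ker φ) = θ.val Y :=
      θ.iso_inv _ _ (fl_quot hflXY _) (φ.quotKerEquivOfSurjective hsurj)
    -- kernel ≃ X
    have e3 : θ.val (LinearMap.ker φ : Submodule R (X × Y)) = θ.val X := by
      refine θ.iso_inv _ _ (fl_sub hflXY _) ?_
      exact
      { toFun := fun z => z.val.1
        invFun := fun x => ⟨(x, 0), rfl⟩
        left_inv := fun z => Subtype.ext (Prod.ext rfl z.property.symm)
        right_inv := fun x => rfl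
        map_add' := fun _ _ => rfl
        map_smul' := fun _ _ => rfl }
    show θ.val (X.prod Y : Submodule R (M × N)) = a + b
    rw [e1, hadd, e2, e3]
    exact congrArg₂ (· + ·) hX hY
  · -- upper bound
    rintro r ⟨Z, rfl⟩
    have hflZ : IsFiniteLength R Z := fl_sub hMN Z
    set φ : Z →ₗ[R] N := (LinearMap.snd R M N).comp Z.subtype with hφ
    have hadd := θ.additive Z hflZ (LinearMap.ker φ)
    -- quotient part is iso to a submodule of N
    have e1 : θ.val (Z ⧸ LinearMap.ker φ) = θ.val (LinearMap.range φ) :=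
      θ.iso_inv _ _ (fl_quot hflZ _) φ.quotKerEquivRange
    have hbnd1 : θ.val (Z ⧸ LinearMap.ker φ) ≤ b := by
      rw [e1]; exact hb.2 ⟨LinearMap.range φ, rfl⟩
    -- kernel part is iso to a submodule of M
    set ψ : (LinearMap.ker φ : Submodule R Z) →ₗ[R] M :=
      (LinearMap.fst R M N).comp (Z.subtype.comp (LinearMap.ker φ).subtype) with hψ
    have hinj : Function.Injective ψ := by
      intro z w h
      have hz : (z.val.val : M × N).2 = 0 := z.property
      have hw : (w.val.val : M × N).2 = 0 := w.property
      have h1 : (z.val.val : M × N).1 = (w.val.val : M × N).1 := h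
      ext
      · exact h1
      · rw [hz, hw]
    have e2 : θ.val (LinearMap.ker φ : Submodule R Z) = θ.val (LinearMap.range ψ) :=
      θ.iso_inv _ _ (fl_sub hflZ _) (LinearEquiv.ofInjective ψ hinj)
    have hbnd2 : θ.val (LinearMap.ker φ : Submodule R Z) ≤ a := by
      rw [e2]; exact ha.2 ⟨LinearMap.range ψ, rfl⟩
    show θ.val Z ≤ a + b
    rw [hadd]
    exact add_le_add hbnd2 hbnd1
end

section
/- Let K be a field and n ∈ ℕ. Suppose (A,B,C,D) and (A',B',C',D') are quadruples of matrices in Mₙ(K) with A and A' invertible, satisfying C·A + D·B = 0, A·C + B·D = 0, C'·A' + D'·B' = 0 and A'·C' + B'·D' = 0. Then D·A = D'·A' and A⁻¹·B = A'⁻¹·B' hold if and only if there exists an invertible matrix U ∈ Mₙ(K) such that A' = U·A, B' = U·B, C' = C·U⁻¹ and D' = D·U⁻¹. -/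
/-- **Lemma (the fibers of the Frenkel–Savage map are `GLₙ`-orbits).**
Let `(A,B,C,D)` and `(A',B',C',D')` be two quadruples of `n × n` matrices over a field `K`
satisfying the preprojective relations of the Kronecker quiver, with `A` and `A'`
invertible. Then `D·A = D'·A'` and `A⁻¹·B = A'⁻¹·B'` hold if and only if the two
quadruples are in the same `GLₙ(K)`-orbit, i.e. there is an invertible `U` with
`A' = U·A`, `B' = U·B`, `C' = C·U⁻¹`, `D' = D·U⁻¹`. -/
theorem frenkelSavage_fiber {K : Type*} [Field K] {n : ℕ}
    (A B C D A' B' C' D' : Matrix (Fin n) (Fin n) K)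
    (hA : IsUnit A) (hA' : IsUnit A')
    (h1 : C * A + D * B = 0) (h2 : A * C + B * D = 0)
    (h1' : C' * A' + D' * B' = 0) (h2' : A' * C' + B' * D' = 0) :
    (D * A = D' * A' ∧ A⁻¹ * B = A'⁻¹ * B') ↔
      ∃ U : Matrix (Fin n) (Fin n) K, IsUnit U ∧
        A' = U * A ∧ B' = U * B ∧ C' = C * U⁻¹ ∧ D' = D * U⁻¹ := by
  have hAd : IsUnit A.det := (Matrix.isUnit_iff_isUnit_det A).1 hA
  have hAd' : IsUnit A'.det := (Matrix.isUnit_iff_isUnit_det A').1 hA'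
  have hAinv : A⁻¹ * A = 1 := Matrix.nonsing_inv_mul A hAd
  have hAinv2 : A * A⁻¹ = 1 := Matrix.mul_nonsing_inv A hAd
  have hAinv' : A'⁻¹ * A' = 1 := Matrix.nonsing_inv_mul A' hAd'
  have hAinv2' : A' * A'⁻¹ = 1 := Matrix.mul_nonsing_inv A' hAd'
  constructor
  · rintro ⟨hDA, hAB⟩
    have hUinvd : IsUnit A⁻¹ := Matrix.isUnit_nonsing_inv_iff.2 hA
    have hU : IsUnit (A' * A⁻¹) := hA'.mul hUinvd
    have hUinv : (A' * A⁻¹)⁻¹ = A * A'⁻¹ := by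
      rw [Matrix.mul_inv_rev, Matrix.nonsing_inv_nonsing_inv A hAd]
    have hBeq : B' = A' * A⁻¹ * B := by
      rw [Matrix.mul_assoc, hAB, ← Matrix.mul_assoc, hAinv2', Matrix.one_mul]
    have hDeq : D' = D * (A * A'⁻¹) := by
      have h := congrArg (fun X => X * A'⁻¹) hDA
      simp only [Matrix.mul_assoc, hAinv2', Matrix.mul_one] at h
      exact h.symm
    have hC : C = -(A⁻¹ * (B * D)) := by
      have := congrArg (fun X => A⁻¹ * X) h2
      simp only [Matrix.mul_add, Matrix.mul_zero, ← Matrix.mul_assoc, hAinv,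
        Matrix.one_mul] at this
      linear_combination (norm := noncomm_ring) this
    have hC' : C' = -(A'⁻¹ * (B' * D')) := by
      have := congrArg (fun X => A'⁻¹ * X) h2'
      simp only [Matrix.mul_add, Matrix.mul_zero, ← Matrix.mul_assoc, hAinv',
        Matrix.one_mul] at this
      linear_combination (norm := noncomm_ring) this
    refine ⟨A' * A⁻¹, hU, ?_, hBeq, ?_, by rw [hUinv]; exact hDeq⟩
    · rw [Matrix.mul_assoc, hAinv, Matrix.mul_one]
    · rw [hUinv, hC', hDeq, hC]
      simp only [← Matrix.mul_assoc, Matrix.neg_mul]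
      rw [← hAB]
  · rintro ⟨U, hU, rfl, rfl, rfl, rfl⟩
    have hUd : IsUnit U.det := (Matrix.isUnit_iff_isUnit_det U).1 hU
    have hUinv : U⁻¹ * U = 1 := Matrix.nonsing_inv_mul U hUd
    constructor
    · calc D * A = D * (U⁻¹ * U) * A := by rw [hUinv, Matrix.mul_one]
        _ = D * U⁻¹ * (U * A) := by noncomm_ring
    · rw [Matrix.mul_inv_rev, Matrix.mul_assoc, ← Matrix.mul_assoc U⁻¹,
        hUinv, Matrix.one_mul]
end

section
/- Let ι be a finite type and let S₁, S₂, S₃ be subsets of the set of nonzero finitely supported functions ι → ℕ such that, regarding such functions as vectors in ι → ℝ, the convex cones spanned by S₁, by S₂ and by S₃ pairwise intersect only in {0}. Let Q₁, Q₂, Q₃, R₁, R₂, R₃ be multivariate formal power series in MvPowerSeries ι ℤ such that each of Q₁, Q₂, Q₃, R₁, R₂, R₃ has constant coefficient 1 and, for each i ∈ {1,2,3}, every nonzero exponent d with nonzero coefficient in Qᵢ or in Rᵢ belongs to Sᵢ. If Q₁·Q₂·Q₃ = R₁·R₂·R₃, then Q₁ = R₁, Q₂ = R₂ and Q₃ =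 R₃. -/
/-!
Induct on the exponent `d` in the well-founded pointwise order. Once the factors agree below `d`,
the coefficient of `t^d` in `∏ Qᵢ - ∏ Rᵢ` is `∑ᵢ (coeff d Qᵢ - coeff d Rᵢ)`: every other term of
the product expansion involves only smaller exponents and the constant terms `1`. A nonzero `d`
lying in two of the `Sᵢ` would give a nonzero common point of two cones, so at most one summand
is nonzero, and the vanishing of the sum forces all of them to vanish.
-/

/-- The convex cone in `ι → ℝ` spanned by a set `S` of exponents (finitely supported
functions `ι → ℕ`): all finite nonnegative real linear combinations of elements of `S`. -/
def coneOf {ι : Type*} (S : Set (ι →₀ ℕ)) : Set (ι → ℝ) :=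
  {x | ∃ (m : ℕ) (c : Fin m → ℝ) (v : Fin m → (ι →₀ ℕ)),
    (∀ j, 0 ≤ c j) ∧ (∀ j, v j ∈ S) ∧ x = ∑ j, c j • (fun i => ((v j i : ℕ) : ℝ))}

namespace MvPowerSeries

variable {σ R : Type*}

theorem coeff_mul_of_forall_lt_coeff_eq_zero [CommSemiring R] {φ ψ : MvPowerSeries σ R}
    {d : σ →₀ ℕ} (h : ∀ e < d, coeff e φ = 0) :
    coeff d (φ * ψ) = coeff d φ * constantCoeff ψ := by
  classical
  rw [coeff_mul, Finset.sum_eq_single (d, 0)]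
  · simp
  · rintro ⟨e, e'⟩ hp hne
    rw [Finset.HasAntidiagonal.mem_antidiagonal] at hp
    have hlt : e < d := by
      refine lt_of_le_of_ne (hp ▸ le_self_add) fun hed => hne ?_
      subst hed
      simpa using hp
    rw [h e hlt, zero_mul]
  · simp

theorem coeff_prod_sub_prod [CommRing R] {ι : Type*} (s : Finset ι)
    (f g : ι → MvPowerSeries σ R) (hf : ∀ i ∈ s, constantCoeff (f i) = 1)
    (hg : ∀ i ∈ s, constantCoeff (g i) = 1) (d : σ →₀ ℕ)
    (hd : ∀ i ∈ s, ∀ e < d, coeff e (f i - g i) = 0) :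
    coeff d (∏ i ∈ s, f i - ∏ i ∈ s, g i) = ∑ i ∈ s, coeff d (f i - g i) := by
  classical
  induction s using Finset.induction_on generalizing d with
  | empty => simp
  | insert a s ha ih =>
    simp only [Finset.forall_mem_insert] at hf hg hd
    have ih' := ih hf.2 hg.2
    have hrest : ∀ e < d, coeff e (∏ i ∈ s, f i - ∏ i ∈ s, g i) = 0 := fun e he => by
      rw [ih' e fun i hi e' he' => hd.2 i hi e' (he'.trans he)]
      exact Finset.sum_eq_zero fun i hi => hd.2 i hi e he
    calc coeff d (∏ i ∈ insert a s, f i - ∏ i ∈ insert a s, g i)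
        = coeff d ((f a - g a) * ∏ i ∈ s, f i + (∏ i ∈ s, f i - ∏ i ∈ s, g i) * g a) := by
          rw [Finset.prod_insert ha, Finset.prod_insert ha]
          ring_nf
      _ = coeff d (f a - g a) + coeff d (∏ i ∈ s, f i - ∏ i ∈ s, g i) := by
          rw [map_add, coeff_mul_of_forall_lt_coeff_eq_zero hd.1,
            coeff_mul_of_forall_lt_coeff_eq_zero hrest, map_prod, Finset.prod_eq_one hf.2, hg.1,
            mul_one, mul_one]
      _ = ∑ i ∈ insert a s, coeff d (f i - g i) := by
          rw [Finset.sum_insert ha, ih' d hd.2]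

theorem eq_of_prod_eq_of_coeff_ne_subsingleton [CommRing R] {ι : Type*} [Fintype ι]
    {f g : ι → MvPowerSeries σ R}
    (hf : ∀ i, constantCoeff (f i) = 1) (hg : ∀ i, constantCoeff (g i) = 1)
    (hsub : ∀ d ≠ 0, {i | coeff d (f i) ≠ coeff d (g i)}.Subsingleton)
    (h : ∏ i, f i = ∏ i, g i) : f = g := by
  suffices ∀ d i, coeff d (f i - g i) = 0 from
    funext fun i => ext fun d => sub_eq_zero.mp (by simpa using this d i)
  intro d
  induction d using WellFoundedLT.induction with | _ d ih =>
  intro i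
  rcases eq_or_ne d 0 with rfl | hd
  · simp [hf, hg]
  have hsum : ∑ j, coeff d (f j - g j) = 0 := by
    rw [← coeff_prod_sub_prod _ f g (fun i _ => hf i) (fun i _ => hg i) d
      fun j _ e he => ih e he j, h, sub_self, map_zero]
  by_contra hi
  rw [map_sub, sub_eq_zero] at hi
  rw [Finset.sum_eq_single i (fun j _ hji => by
    rw [map_sub, sub_eq_zero]
    by_contra hj
    exact hji (hsub d hd hj hi)) (by simp), map_sub, sub_eq_zero] at hsum
  exact hi hsum

theorem mem_of_coeff_ne_coeff [Semiring R] {S : Set (σ →₀ ℕ)} {φ ψ : MvPowerSeries σ R}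
    (hφ : ∀ d : σ →₀ ℕ, d ≠ 0 → coeff d φ ≠ 0 → d ∈ S)
    (hψ : ∀ d : σ →₀ ℕ, d ≠ 0 → coeff d ψ ≠ 0 → d ∈ S)
    {d : σ →₀ ℕ} (hd : d ≠ 0) (h : coeff d φ ≠ coeff d ψ) : d ∈ S := by
  by_cases hφd : coeff d φ = 0
  · exact hψ d hd (hφd ▸ h.symm)
  · exact hφ d hd hφd

end MvPowerSeries

lemma mem_coneOf_of_mem {ι : Type*} {S : Set (ι →₀ ℕ)} {d : ι →₀ ℕ} (hd : d ∈ S) :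
    (fun i => ((d i : ℕ) : ℝ)) ∈ coneOf S :=
  ⟨1, fun _ => 1, fun _ => d, fun _ => zero_le_one, fun _ => hd, by simp⟩

lemma eq_zero_of_mem_of_mem_of_coneOf_inter_subset {ι : Type*} {S T : Set (ι →₀ ℕ)}
    (h : coneOf S ∩ coneOf T ⊆ {0}) {d : ι →₀ ℕ} (hS : d ∈ S) (hT : d ∈ T) : d = 0 := by
  ext i
  simpa using congrFun (h ⟨mem_coneOf_of_mem hS, mem_coneOf_of_mem hT⟩) i

theorem powerSeries_splitting_general {ι : Type*}
    (S₁ S₂ S₃ : Set (ι →₀ ℕ))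
    (h12 : coneOf S₁ ∩ coneOf S₂ ⊆ {0})
    (h13 : coneOf S₁ ∩ coneOf S₃ ⊆ {0})
    (h23 : coneOf S₂ ∩ coneOf S₃ ⊆ {0})
    (Q₁ Q₂ Q₃ R₁ R₂ R₃ : MvPowerSeries ι ℤ)
    (hQ₁c : MvPowerSeries.coeff 0 Q₁ = 1) (hQ₂c : MvPowerSeries.coeff 0 Q₂ = 1)
    (hQ₃c : MvPowerSeries.coeff 0 Q₃ = 1) (hR₁c : MvPowerSeries.coeff 0 R₁ = 1)
    (hR₂c : MvPowerSeries.coeff 0 R₂ = 1) (hR₃c : MvPowerSeries.coeff 0 R₃ = 1)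
    (hQ₁s : ∀ d : ι →₀ ℕ, d ≠ 0 → MvPowerSeries.coeff d Q₁ ≠ 0 → d ∈ S₁)
    (hQ₂s : ∀ d : ι →₀ ℕ, d ≠ 0 → MvPowerSeries.coeff d Q₂ ≠ 0 → d ∈ S₂)
    (hQ₃s : ∀ d : ι →₀ ℕ, d ≠ 0 → MvPowerSeries.coeff d Q₃ ≠ 0 → d ∈ S₃)
    (hR₁s : ∀ d : ι →₀ ℕ, d ≠ 0 → MvPowerSeries.coeff d R₁ ≠ 0 → d ∈ S₁)
    (hR₂s : ∀ d : ι →₀ ℕ, d ≠ 0 → MvPowerSeries.coeff d R₂ ≠ 0 → d ∈ S₂)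
    (hR₃s : ∀ d : ι →₀ ℕ, d ≠ 0 → MvPowerSeries.coeff d R₃ ≠ 0 → d ∈ S₃)
    (heq : Q₁ * Q₂ * Q₃ = R₁ * R₂ * R₃) :
    Q₁ = R₁ ∧ Q₂ = R₂ ∧ Q₃ = R₃ := by
  let S := ![S₁, S₂, S₃]
  let Q := ![Q₁, Q₂, Q₃]
  let R := ![R₁, R₂, R₃]
  have hcone : ∀ i j, i ≠ j → coneOf (S i) ∩ coneOf (S j) ⊆ {0} := by
    intro i j hij
    fin_cases i <;> fin_cases j
    all_goals first
      | exact absurd rfl hij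
      | exact h12 | exact h13 | exact h23
      | exact Set.inter_comm _ _ ▸ h12 | exact Set.inter_comm _ _ ▸ h13
      | exact Set.inter_comm _ _ ▸ h23
  have hsupp : ∀ i d, d ≠ 0 → MvPowerSeries.coeff d (Q i) ≠ MvPowerSeries.coeff d (R i) →
      d ∈ S i := by
    intro i d
    fin_cases i
    exacts [MvPowerSeries.mem_of_coeff_ne_coeff hQ₁s hR₁s,
      MvPowerSeries.mem_of_coeff_ne_coeff hQ₂s hR₂s,
      MvPowerSeries.mem_of_coeff_ne_coeff hQ₃s hR₃s]
  have hQR : Q = R := by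
    refine MvPowerSeries.eq_of_prod_eq_of_coeff_ne_subsingleton (fun i => ?_) (fun i => ?_)
      (fun d hd i hi j hj => ?_) ?_
    · fin_cases i <;> simpa [Q]
    · fin_cases i <;> simpa [R]
    · by_contra hij
      exact hd (eq_zero_of_mem_of_mem_of_coneOf_inter_subset (hcone i j hij)
        (hsupp i d hd hi) (hsupp j d hd hj))
    · simpa [Q, R, Fin.prod_univ_three] using heq
  exact ⟨congrFun hQR 0, congrFun hQR 1, congrFun hQR 2⟩

/-- **Lemma (splitting of a power-series identity along cone-disjoint supports).**
Let `S₁, S₂, S₃` be sets of nonzero exponents whose spanned convex cones pairwise meet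
only in `0`. If `Q₁, Q₂, Q₃, R₁, R₂, R₃` are formal power series with constant term `1`
whose nonzero exponents with nonzero coefficient lie in `S₁`, `S₂`, `S₃` respectively,
and `Q₁·Q₂·Q₃ = R₁·R₂·R₃`, then `Q₁ = R₁`, `Q₂ = R₂` and `Q₃ = R₃`. -/
theorem powerSeries_splitting {ι : Type*} [Fintype ι]
    (S₁ S₂ S₃ : Set (ι →₀ ℕ))
    (hS₁ : ∀ d ∈ S₁, d ≠ 0) (hS₂ : ∀ d ∈ S₂, d ≠ 0) (hS₃ : ∀ d ∈ S₃, d ≠ 0)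
    (h12 : coneOf S₁ ∩ coneOf S₂ ⊆ {0})
    (h13 : coneOf S₁ ∩ coneOf S₃ ⊆ {0})
    (h23 : coneOf S₂ ∩ coneOf S₃ ⊆ {0})
    (Q₁ Q₂ Q₃ R₁ R₂ R₃ : MvPowerSeries ι ℤ)
    (hQ₁c : MvPowerSeries.coeff 0 Q₁ = 1) (hQ₂c : MvPowerSeries.coeff 0 Q₂ = 1)
    (hQ₃c : MvPowerSeries.coeff 0 Q₃ = 1) (hR₁c : MvPowerSeries.coeff 0 R₁ = 1)
    (hR₂c : MvPowerSeries.coeff 0 R₂ = 1) (hR₃c : MvPowerSeries.coeff 0 R₃ = 1)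
    (hQ₁s : ∀ d : ι →₀ ℕ, d ≠ 0 → MvPowerSeries.coeff d Q₁ ≠ 0 → d ∈ S₁)
    (hQ₂s : ∀ d : ι →₀ ℕ, d ≠ 0 → MvPowerSeries.coeff d Q₂ ≠ 0 → d ∈ S₂)
    (hQ₃s : ∀ d : ι →₀ ℕ, d ≠ 0 → MvPowerSeries.coeff d Q₃ ≠ 0 → d ∈ S₃)
    (hR₁s : ∀ d : ι →₀ ℕ, d ≠ 0 → MvPowerSeries.coeff d R₁ ≠ 0 → d ∈ S₁)
    (hR₂s : ∀ d : ι →₀ ℕ, d ≠ 0 → MvPowerSeries.coeff d R₂ ≠ 0 → d ∈ S₂)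
    (hR₃s : ∀ d : ι →₀ ℕ, d ≠ 0 → MvPowerSeries.coeff d R₃ ≠ 0 → d ∈ S₃)
    (heq : Q₁ * Q₂ * Q₃ = R₁ * R₂ * R₃) :
    Q₁ = R₁ ∧ Q₂ = R₂ ∧ Q₃ = R₃ :=
  powerSeries_splitting_general S₁ S₂ S₃ h12 h13 h23 Q₁ Q₂ Q₃ R₁ R₂ R₃ hQ₁c hQ₂c hQ₃c hR₁c hR₂c hR₃c
    hQ₁s hQ₂s hQ₃s hR₁s hR₂s hR₃s heq
end
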